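/- In the graph G_k, for any two distinct vertices u = (u_x,u_y) and v = (v_x,v_y) in the clique B, exactly |u_x − v_x| vertices of A are adjacent to exactly one of u and v, and exactly |u_y − v_y| vertices of C are adjacent to exactly one of u and v; consequently sd(u,v) ≥ |u_x − v_x| + |u_y − v_y|. -/

import Mathlib

open Finset
open scoped Classical

variable {V : Type*}

/-- `sdPair G x y`: the number of vertices other than `x, y` adjacent to exactly
one of `x` and `y`. -/
noncomputable def sdPair [Fintype V] (G : SimpleGraph V) (x y : V) : ℕ :=
  (univ.filter fun z => z ≠ x ∧ z ≠ y ∧ ¬(G.Adj z x ↔ G.Adj z y)).card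

/-- The set `B = ⋃_{i,j ∈ [k]} B_{ij} ⊆ ℤ²`, where
`B₁₁ = {(pk − q, qk + p) : 1 ≤ p ≤ k, 0 ≤ q ≤ k − 1}` and
`B_{ij} = B₁₁ + ((i−1)k², (j−1)k²)`. -/
noncomputable def Bset (k : ℕ) : Finset (ℤ × ℤ) :=
  ((Finset.Icc (1 : ℤ) k ×ˢ Finset.Icc (0 : ℤ) ((k : ℤ) - 1)) ×ˢ
      (Finset.Icc (1 : ℤ) k ×ˢ Finset.Icc (1 : ℤ) k)).image
    fun x => (x.1.1 * k - x.1.2 + (x.2.1 - 1) * (k : ℤ) ^ 2,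
              x.1.2 * k + x.1.1 + (x.2.2 - 1) * (k : ℤ) ^ 2)

/-- Vertices of the graph `G_k`: the clique `A = {a_1, …, a_{k³}}`, the clique `B`
(one vertex for each point of `Bset k`), and the clique `C = {c_1, …, c_{k³}}`.
Here `Fin (k^3)` index `i` represents `a_{i+1}` (resp. `c_{i+1}`). -/
abbrev GkVtx (k : ℕ) := Fin (k ^ 3) ⊕ ({ b : ℤ × ℤ // b ∈ Bset k } ⊕ Fin (k ^ 3))

/-- The underlying relation of `G_k`: `A`, `B`, `C` are cliques, `a_i` is adjacent
to `(b_x, b_y) ∈ B` iff `i < b_x`, `(b_x, b_y)` is adjacent to `c_j` iff `b_y < j`,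
and there are no `A`–`C` edges. -/
def GkRel (k : ℕ) : GkVtx k → GkVtx k → Prop
  | Sum.inl i, Sum.inl j => i ≠ j
  | Sum.inl i, Sum.inr (Sum.inl b) => (i : ℤ) + 1 < b.1.1
  | Sum.inr (Sum.inl b), Sum.inr (Sum.inl b') => b ≠ b'
  | Sum.inr (Sum.inl b), Sum.inr (Sum.inr j) => b.1.2 < (j : ℤ) + 1
  | Sum.inr (Sum.inr i), Sum.inr (Sum.inr j) => i ≠ j
  | _, _ => False

/-- The graph `G_k`. -/
def Gk (k : ℕ) : SimpleGraph (GkVtx k) := SimpleGraph.fromRel (GkRel k)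

/-!
The `A`-neighbourhood of a vertex `(b_x, b_y)` of `B` is the initial segment `{a_i : i < b_x}`
and its `C`-neighbourhood is the final segment `{c_j : j > b_y}`. Since all coordinates lie in
`[1, t]`, two initial (or final) segments of lengths `m` and `m'` differ in exactly `|m - m'|`
vertices, and the distinguishers found in `A` and in `C` are disjoint and counted by `sd(u, v)`.
-/

lemma Fin.card_filter_intCast_lt {n : ℕ} {a : ℤ} (h₀ : 0 ≤ a) (hn : a ≤ n) :
    (#{i : Fin n | (i : ℤ) < a} : ℤ) = a := by
  lift a to ℕ using h₀
  simp only [Nat.cast_lt, Fin.card_filter_val_lt]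
  omega

lemma card_filter_not_iff_of_imp {α : Type*} [Fintype α] {p q : α → Prop} [DecidablePred p]
    [DecidablePred q] (hpq : ∀ x, p x → q x) : #{x | ¬(p x ↔ q x)} = #{x | q x} - #{x | p x} := by
  rw [← card_sdiff_of_subset (monotone_filter_right _ fun x _ => hpq x)]
  congr 1
  ext x
  simp only [mem_sdiff, mem_filter, mem_univ, true_and]
  have := hpq x
  tauto

lemma Fin.card_filter_lt_xor_lt {n : ℕ} {a b : ℤ} (ha₀ : 0 ≤ a) (ha : a ≤ n) (hb₀ : 0 ≤ b)
    (hb : b ≤ n) : (#{i : Fin n | ¬((i : ℤ) < a ↔ (i : ℤ) < b)} : ℤ) = |a - b| := by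
  wlog hab : a ≤ b generalizing a b
  · simpa only [iff_comm, abs_sub_comm] using this hb₀ hb ha₀ ha (by omega)
  have hab' (i : Fin n) (h : (i : ℤ) < a) : (i : ℤ) < b := h.trans_le hab
  have hle : #{i : Fin n | (i : ℤ) < a} ≤ #{i : Fin n | (i : ℤ) < b} :=
    card_le_card (monotone_filter_right _ fun i _ => hab' i)
  rw [card_filter_not_iff_of_imp hab', Nat.cast_sub hle,
    Fin.card_filter_intCast_lt ha₀ ha, Fin.card_filter_intCast_lt hb₀ hb, abs_of_nonpos (by omega)]
  ring

lemma coords_mem_Icc_of_mem_Bset {k : ℕ} {b : ℤ × ℤ} (hb : b ∈ Bset k) :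
    b.1 ∈ Set.Icc 1 ((k : ℤ) ^ 3) ∧ b.2 ∈ Set.Icc 1 ((k : ℤ) ^ 3) := by
  simp only [Bset, mem_image, mem_product, mem_Icc] at hb
  obtain ⟨⟨⟨p, q⟩, i, j⟩, ⟨⟨⟨hp₁, hp₂⟩, hq₁, hq₂⟩, ⟨hi₁, hi₂⟩, hj₁, hj₂⟩, rfl⟩ := hb
  have hk : (0 : ℤ) ≤ k := by positivity
  refine ⟨⟨?_, ?_⟩, ?_, ?_⟩ <;> nlinarith [mul_nonneg hk hk]

lemma card_add_card_le_sdPair {α β γ : Type*} [Fintype α] [Fintype β] [Fintype γ]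
    (G : SimpleGraph (α ⊕ β ⊕ γ)) (x y : β) :
    #{a : α | ¬(G.Adj (.inl a) (.inr (.inl x)) ↔ G.Adj (.inl a) (.inr (.inl y)))} +
        #{c : γ | ¬(G.Adj (.inr (.inr c)) (.inr (.inl x)) ↔ G.Adj (.inr (.inr c)) (.inr (.inl y)))} ≤
      sdPair G (.inr (.inl x)) (.inr (.inl y)) := by
  rw [← card_map (.inr : γ ↪ β ⊕ γ), ← card_disjSum, sdPair]
  refine card_le_card fun z hz => ?_
  rcases z with a | b | c <;> simp_all

section Gk

variable {k : ℕ}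

lemma Gk_adj_A_B_iff (i : Fin (k ^ 3)) (b : { b : ℤ × ℤ // b ∈ Bset k }) :
    (Gk k).Adj (Sum.inl i) (Sum.inr (Sum.inl b)) ↔ (i : ℤ) < b.1.1 - 1 := by
  simp only [Gk, SimpleGraph.fromRel_adj, GkRel, ne_eq, reduceCtorEq, not_false_eq_true, or_false,
    true_and]
  omega

lemma Gk_adj_C_B_iff (j : Fin (k ^ 3)) (b : { b : ℤ × ℤ // b ∈ Bset k }) :
    (Gk k).Adj (Sum.inr (Sum.inr j)) (Sum.inr (Sum.inl b)) ↔ ¬(j : ℤ) < b.1.2 := by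
  simp only [Gk, SimpleGraph.fromRel_adj, GkRel, ne_eq, Sum.inr.injEq, reduceCtorEq,
    not_false_eq_true, false_or, true_and]
  omega

end Gk

theorem Gk_B_pair_distinguishers_general (k : ℕ)
    (u v : { b : ℤ × ℤ // b ∈ Bset k }) :
    (((univ.filter fun i : Fin (k ^ 3) =>
        ¬((Gk k).Adj (Sum.inl i) (Sum.inr (Sum.inl u)) ↔
          (Gk k).Adj (Sum.inl i) (Sum.inr (Sum.inl v)))).card : ℤ)
        = |u.1.1 - v.1.1|) ∧
    (((univ.filter fun j : Fin (k ^ 3) =>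
        ¬((Gk k).Adj (Sum.inr (Sum.inr j)) (Sum.inr (Sum.inl u)) ↔
          (Gk k).Adj (Sum.inr (Sum.inr j)) (Sum.inr (Sum.inl v)))).card : ℤ)
        = |u.1.2 - v.1.2|) ∧
    |u.1.1 - v.1.1| + |u.1.2 - v.1.2| ≤
      (sdPair (Gk k) (Sum.inr (Sum.inl u)) (Sum.inr (Sum.inl v)) : ℤ) := by
  obtain ⟨⟨hux₁, hux₂⟩, huy₁, huy₂⟩ := coords_mem_Icc_of_mem_Bset u.2
  obtain ⟨⟨hvx₁, hvx₂⟩, hvy₁, hvy₂⟩ := coords_mem_Icc_of_mem_Bset v.2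
  have hn : ((k ^ 3 : ℕ) : ℤ) = (k : ℤ) ^ 3 := Nat.cast_pow k 3
  have hA : (#{i : Fin (k ^ 3) | ¬((Gk k).Adj (Sum.inl i) (Sum.inr (Sum.inl u)) ↔
      (Gk k).Adj (Sum.inl i) (Sum.inr (Sum.inl v)))} : ℤ) = |u.1.1 - v.1.1| := by
    simp only [Gk_adj_A_B_iff]
    rw [Fin.card_filter_lt_xor_lt (by omega) (by omega) (by omega) (by omega),
      sub_sub_sub_cancel_right]
  have hC : (#{j : Fin (k ^ 3) | ¬((Gk k).Adj (Sum.inr (Sum.inr j)) (Sum.inr (Sum.inl u)) ↔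
      (Gk k).Adj (Sum.inr (Sum.inr j)) (Sum.inr (Sum.inl v)))} : ℤ) = |u.1.2 - v.1.2| := by
    simp only [Gk_adj_C_B_iff, not_iff_not]
    exact Fin.card_filter_lt_xor_lt (by omega) (by omega) (by omega) (by omega)
  refine ⟨hA, hC, ?_⟩
  rw [← hA, ← hC]
  exact_mod_cast card_add_card_le_sdPair (Gk k) u v

/-- For distinct `u, v` in the clique `B` of `G_k`: exactly `|u_x − v_x|` vertices
of `A` and exactly `|u_y − v_y|` vertices of `C` are adjacent to exactly one of `u`
and `v`; consequently `sd(u,v) ≥ |u_x − v_x| + |u_y − v_y|`. -/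
theorem Gk_B_pair_distinguishers (k : ℕ) (hk : 2 ≤ k)
    (u v : { b : ℤ × ℤ // b ∈ Bset k }) (huv : u ≠ v) :
    (((univ.filter fun i : Fin (k ^ 3) =>
        ¬((Gk k).Adj (Sum.inl i) (Sum.inr (Sum.inl u)) ↔
          (Gk k).Adj (Sum.inl i) (Sum.inr (Sum.inl v)))).card : ℤ)
        = |u.1.1 - v.1.1|) ∧
    (((univ.filter fun j : Fin (k ^ 3) =>
        ¬((Gk k).Adj (Sum.inr (Sum.inr j)) (Sum.inr (Sum.inl u)) ↔
          (Gk k).Adj (Sum.inr (Sum.inr j)) (Sum.inr (Sum.inl v)))).card : ℤ)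
        = |u.1.2 - v.1.2|) ∧
    |u.1.1 - v.1.1| + |u.1.2 - v.1.2| ≤
      (sdPair (Gk k) (Sum.inr (Sum.inl u)) (Sum.inr (Sum.inl v)) : ℤ) :=
  Gk_B_pair_distinguishers_general k u v
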